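/- arXiv:0907.1341 — 4 statements merged into one kernel-verified Lean document; each statement's English description precedes it below -/
import Mathlib

section
/- Let G be a finite simple graph and let F = [S, V\S] be a nonempty edge cut of G (S a nonempty proper subset of the vertex set) such that all edges of F are incident to a single common vertex in S (the edges of F form a star). Then E(G - F) < E(G) strictly. -/
/-!
Let `A` and `D` be the adjacency matrices of `G` and `G - F`. Since `D` is block diagonal for the
partition `{S, Sᶜ}`, so is its sign matrix `U`, a symmetric orthogonal matrix with `D U = |D|`;
as `A - D` lives on the off-diagonal blocks, `E(G - F) = tr (D U) = tr (A U)`.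
For any orthogonal `U` we have `A U = |A| Q` with `Q` orthogonal, and for `P ⪰ 0` the identity
`2 tr (P (1 - Q)) = tr (R P Rᵀ)`, `R = 1 - Q`, gives `tr (A U) ≤ tr |A| = E(G)`, with equality
only if `A U = |A|` is positive semidefinite. When the cut is a star at `v`, the matrix `A U` has
a zero diagonal entry at `v` but a nonzero entry at `(v, j)` for a cut neighbour `j` of `v`, which
a positive semidefinite matrix cannot have.
-/

open Finset

noncomputable def graphEnergy {V : Type*} [Fintype V] [DecidableEq V] (G : SimpleGraph V) : ℝ :=
  have : DecidableRel G.Adj := Classical.decRel _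
  ∑ i, |(show (G.adjMatrix ℝ).IsHermitian by
      rw [Matrix.IsHermitian, Matrix.conjTranspose_eq_transpose_of_trivial]
      exact G.isSymm_adjMatrix).eigenvalues i|

open Matrix
open scoped MatrixOrder ComplexOrder

namespace Matrix

variable {n : Type*} [Fintype n]

def IsBlockDiagonal {R : Type*} [Zero R] (S : Set n) (X : Matrix n n R) : Prop :=
  ∀ i j, ¬(i ∈ S ↔ j ∈ S) → X i j = 0

theorem IsBlockDiagonal.trace_mul_eq {R : Type*} [Semiring R] {S : Set n} {U A D : Matrix n n R}
    (hU : U.IsBlockDiagonal S) (hAD : ∀ i j, (i ∈ S ↔ j ∈ S) → A i j = D i j) :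
    trace (A * U) = trace (D * U) := by
  refine Finset.sum_congr rfl fun i _ => Finset.sum_congr rfl fun k _ => ?_
  by_cases hik : i ∈ S ↔ k ∈ S
  · simp only [hAD i k hik]
  · simp only [hU k i (by tauto), mul_zero]

variable [DecidableEq n]

theorem commute_diagonal_indicator_iff {R : Type*} [Semiring R] {S : Set n} {X : Matrix n n R} :
    Commute X (diagonal (S.indicator 1)) ↔ X.IsBlockDiagonal S := by
  have key : ∀ i j, X i j * S.indicator 1 j = S.indicator 1 i * X i j ↔
      (¬(i ∈ S ↔ j ∈ S) → X i j = 0) := by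
    intro i j
    by_cases hi : i ∈ S <;> by_cases hj : j ∈ S <;> simp [hi, hj, eq_comm]
  simp only [commute_iff_eq, ← Matrix.ext_iff, mul_diagonal, diagonal_mul, key]
  rfl

theorem PosSemidef.apply_eq_zero_of_diag_eq_zero {𝕜 : Type*} [RCLike 𝕜] {M : Matrix n n 𝕜}
    (hM : M.PosSemidef) {i : n} (hi : M i i = 0) (j : n) : M j i = 0 := by
  have := (hM.dotProduct_mulVec_zero_iff (Pi.single i 1)).mp (by simp [hi])
  simpa using congrFun this j

variable {X P Q U : Matrix n n ℝ}

theorem IsHermitian.trace_cfc (hX : X.IsHermitian) (f : ℝ → ℝ) :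
    trace (cfc f X) = ∑ i, f (hX.eigenvalues i) := by
  rw [hX.cfc_eq, IsHermitian.cfc, Unitary.conjStarAlgAut_apply, trace_mul_cycle,
    Unitary.coe_star_mul_self, one_mul, trace_diagonal]
  rfl

theorem posSemidef_cfc_abs (X : Matrix n n ℝ) : (cfc (|·| : ℝ → ℝ) X).PosSemidef :=
  (cfc_nonneg fun x _ => abs_nonneg x).posSemidef

theorem two_mul_trace_mul_one_sub (hQ : Q ∈ unitaryGroup n ℝ) (B : Matrix n n ℝ) :
    2 * trace (star B * B * (1 - Q)) = trace (star (B * star (1 - Q)) * (B * star (1 - Q))) := by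
  set R := 1 - Q
  have hR : star R * R = R + star R := by
    simp only [R, star_sub, star_one, sub_mul, mul_sub, one_mul, mul_one,
      mem_unitaryGroup_iff'.mp hQ]
    abel
  have hstar : trace (star B * B * star R) = trace (star B * B * R) := by
    calc trace (star B * B * star R) = trace (star (R * (star B * B))) := by
          rw [star_mul, (IsSelfAdjoint.star_mul_self B).star_eq]
      _ = trace (star B * B * R) := by
          rw [star_eq_conjTranspose, trace_conjTranspose, star_trivial, trace_mul_comm]
  calc 2 * trace (star B * B * R) = trace (star B * B * (R + star R)) := by
        rw [mul_add, trace_add, hstar]; ring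
    _ = trace (R * (star B * B) * star R) := by
        rw [← hR, ← Matrix.mul_assoc, trace_mul_comm]; simp only [Matrix.mul_assoc]
    _ = _ := by rw [star_mul, star_star]; simp only [Matrix.mul_assoc]

theorem PosSemidef.trace_mul_unitary_le (hP : P.PosSemidef) (hQ : Q ∈ unitaryGroup n ℝ) :
    trace (P * Q) ≤ trace P := by
  obtain ⟨B, rfl⟩ := CStarAlgebra.nonneg_iff_eq_star_mul_self.mp hP.nonneg
  have h := two_mul_trace_mul_one_sub hQ B
  have h0 := (posSemidef_conjTranspose_mul_self (B * star (1 - Q))).trace_nonneg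
  rw [mul_sub, mul_one, trace_sub] at h
  rw [← star_eq_conjTranspose] at h0
  linarith

theorem PosSemidef.mul_unitary_eq_self_of_trace_eq (hP : P.PosSemidef)
    (hQ : Q ∈ unitaryGroup n ℝ) (h : trace (P * Q) = trace P) : P * Q = P := by
  obtain ⟨B, rfl⟩ := CStarAlgebra.nonneg_iff_eq_star_mul_self.mp hP.nonneg
  have hBR : B * star (1 - Q) = 0 := by
    rw [← trace_conjTranspose_mul_self_eq_zero_iff, ← star_eq_conjTranspose,
      ← two_mul_trace_mul_one_sub hQ, mul_sub, mul_one, trace_sub, h, sub_self, mul_zero]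
  have hRP : (1 - Q) * (star B * B) = 0 := by
    rw [← mul_assoc, ← star_star (1 - Q), ← star_mul, hBR, star_zero, zero_mul]
  have hQP : star B * B * star Q = star B * B := by
    have := congrArg star hRP
    rw [star_mul, star_zero, star_mul, star_star, star_sub, star_one, mul_sub, mul_one,
      sub_eq_zero] at this
    exact this.symm
  rw [← hQP, mul_assoc, mem_unitaryGroup_iff'.mp hQ, mul_one, hQP]

theorem IsHermitian.exists_unitary_mul_eq_cfc_abs (hX : X.IsHermitian) :
    ∃ W ∈ unitaryGroup n ℝ, W.IsHermitian ∧ X * W = cfc (|·| : ℝ → ℝ) X ∧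
      ∀ Y, Commute X Y → Commute W Y := by
  have hcont (f : ℝ → ℝ) : ContinuousOn f (spectrum ℝ X) := X.finite_real_spectrum.continuousOn f
  set W := cfc (fun x : ℝ => if 0 ≤ x then (1 : ℝ) else -1) X
  have hW : W.IsHermitian := cfc_predicate _ X
  have hWW : W * W = 1 := by
    rw [← cfc_mul _ _ X (hcont _) (hcont _), ← cfc_one ℝ X]
    congr 1
    funext x
    split_ifs <;> norm_num
  refine ⟨W, mem_unitaryGroup_iff.mpr (by rw [star_eq_conjTranspose, hW.eq, hWW]), hW, ?_,
    fun Y hY => hY.cfc_real _⟩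
  conv_lhs => rw [← cfc_id ℝ X hX.isSelfAdjoint]
  rw [← cfc_mul _ _ X (hcont _) (hcont _)]
  congr 1
  funext x
  split_ifs with hx
  · simp [abs_of_nonneg hx]
  · simp [abs_of_neg (not_le.mp hx)]

theorem IsHermitian.exists_unitary_mul_unitary_eq (hX : X.IsHermitian)
    (hU : U ∈ unitaryGroup n ℝ) : ∃ Q ∈ unitaryGroup n ℝ, X * U = cfc (|·| : ℝ → ℝ) X * Q := by
  obtain ⟨W, hW, hW', hXW, -⟩ := hX.exists_unitary_mul_eq_cfc_abs
  refine ⟨W * U, Submonoid.mul_mem _ hW hU, ?_⟩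
  have hWW : W * W = 1 := by
    simpa only [star_eq_conjTranspose, hW'.eq] using mem_unitaryGroup_iff.mp hW
  rw [← hXW, mul_assoc, ← mul_assoc W, hWW, one_mul]

theorem IsHermitian.trace_mul_unitary_le (hX : X.IsHermitian) (hU : U ∈ unitaryGroup n ℝ) :
    trace (X * U) ≤ trace (cfc (|·| : ℝ → ℝ) X) := by
  obtain ⟨Q, hQ, hXU⟩ := hX.exists_unitary_mul_unitary_eq hU
  rw [hXU]
  exact (posSemidef_cfc_abs X).trace_mul_unitary_le hQ

theorem IsHermitian.mul_unitary_eq_cfc_abs_of_trace_eq (hX : X.IsHermitian)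
    (hU : U ∈ unitaryGroup n ℝ) (h : trace (X * U) = trace (cfc (|·| : ℝ → ℝ) X)) :
    X * U = cfc (|·| : ℝ → ℝ) X := by
  obtain ⟨Q, hQ, hXU⟩ := hX.exists_unitary_mul_unitary_eq hU
  rw [hXU] at h ⊢
  exact (posSemidef_cfc_abs X).mul_unitary_eq_self_of_trace_eq hQ h

theorem not_posSemidef_mul_of_star_crossing {A U : Matrix n n ℝ} {S : Set n} {v j : n}
    (hA : A.IsHermitian) (hU : U ∈ unitaryGroup n ℝ) (hU' : U.IsHermitian)
    (hUS : U.IsBlockDiagonal S)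
    (hv : v ∈ S) (hj : j ∉ S) (hAvv : A v v = 0) (hAvj : A v j ≠ 0)
    (hAS : ∀ i k, i ∈ S → k ∉ S → i ≠ v → A i k = 0) :
    ¬ (A * U).PosSemidef := by
  intro hM
  have hAsymm (i k : n) : A k i = A i k := by simpa using hA.apply i k
  have hMsymm (i k : n) : (A * U) k i = (A * U) i k := by simpa using hM.1.apply i k
  have hM_S_j (i : n) (hi : i ∈ S) (hiv : i ≠ v) : (A * U) i j = 0 := by
    rw [mul_apply]
    refine Finset.sum_eq_zero fun k _ => ?_
    by_cases hk : k ∈ S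
    · rw [hUS k j (by tauto), mul_zero]
    · rw [hAS i k hi hk hiv, zero_mul]
  have hM_j_S (i : n) (hi : i ∈ S) : (A * U) j i = A v j * U v i := by
    rw [mul_apply, hAsymm]
    refine Finset.sum_eq_single v (fun k _ hkv => ?_) (by simp)
    by_cases hk : k ∈ S
    · rw [hAsymm, hAS k j hk hj hkv, zero_mul]
    · rw [hUS k i (by tauto), mul_zero]
  have hUv (i : n) (hiv : i ≠ v) : U v i = 0 := by
    by_cases hi : i ∈ S
    · have h := hM_j_S i hi
      rw [hMsymm, hM_S_j i hi hiv] at h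
      exact (mul_eq_zero.mp h.symm).resolve_left hAvj
    · exact hUS v i (by tauto)
  have hMvv : (A * U) v v = 0 := by
    rw [mul_apply]
    refine Finset.sum_eq_zero fun k _ => ?_
    rcases eq_or_ne k v with rfl | hkv
    · rw [hAvv, zero_mul]
    · rw [← hU'.apply, hUv k hkv, star_zero, mul_zero]
  have hUvv : U v v = 0 := by
    have h := hM.apply_eq_zero_of_diag_eq_zero hMvv j
    rw [hM_j_S v hv] at h
    exact (mul_eq_zero.mp h).resolve_left hAvj
  have hrow (k : n) : U v k = 0 := (eq_or_ne k v).elim (· ▸ hUvv) (hUv k)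
  have h1 := congrFun (congrFun (mem_unitaryGroup_iff.mp hU) v) v
  simp [mul_apply, hrow] at h1

theorem trace_cfc_abs_lt_of_star_crossing {A D : Matrix n n ℝ} {S : Set n} {v j : n}
    (hA : A.IsHermitian) (hD : D.IsHermitian) (hDS : D.IsBlockDiagonal S)
    (hAD : ∀ i k, (i ∈ S ↔ k ∈ S) → A i k = D i k)
    (hv : v ∈ S) (hj : j ∉ S) (hAvv : A v v = 0) (hAvj : A v j ≠ 0)
    (hAS : ∀ i k, i ∈ S → k ∉ S → i ≠ v → A i k = 0) :
    trace (cfc (|·| : ℝ → ℝ) D) < trace (cfc (|·| : ℝ → ℝ) A) := by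
  obtain ⟨U, hU, hU', hDU, hcomm⟩ := hD.exists_unitary_mul_eq_cfc_abs
  have hUS : U.IsBlockDiagonal S :=
    commute_diagonal_indicator_iff.mp (hcomm _ (commute_diagonal_indicator_iff.mpr hDS))
  rw [← hDU, ← hUS.trace_mul_eq hAD]
  refine (hA.trace_mul_unitary_le hU).lt_of_ne fun h => ?_
  refine not_posSemidef_mul_of_star_crossing hA hU hU' hUS hv hj hAvv hAvj hAS ?_
  rw [hA.mul_unitary_eq_cfc_abs_of_trace_eq hU h]
  exact posSemidef_cfc_abs A

end Matrix

namespace SimpleGraph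

variable {V : Type*} (G : SimpleGraph V) (S : Set V)

def edgeCut : Set (Sym2 V) := {e | e ∈ G.edgeSet ∧ ∃ a b, e = s(a, b) ∧ a ∈ S ∧ b ∉ S}

variable {G S}

theorem mk_mem_edgeCut_iff {a b : V} : s(a, b) ∈ G.edgeCut S ↔ G.Adj a b ∧ ¬(a ∈ S ↔ b ∈ S) := by
  simp only [edgeCut, Set.mem_ofPred_eq, mem_edgeSet, Sym2.eq_iff]
  constructor
  · rintro ⟨hab, c, d, ⟨rfl, rfl⟩ | ⟨rfl, rfl⟩, hc, hd⟩ <;> tauto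
  · rintro ⟨hab, hS⟩
    by_cases ha : a ∈ S
    · exact ⟨hab, a, b, Or.inl ⟨rfl, rfl⟩, ha, by tauto⟩
    · exact ⟨hab, b, a, Or.inr ⟨rfl, rfl⟩, by tauto, ha⟩

theorem deleteEdges_edgeCut_adj {a b : V} :
    (G.deleteEdges (G.edgeCut S)).Adj a b ↔ G.Adj a b ∧ (a ∈ S ↔ b ∈ S) := by
  rw [deleteEdges_adj, mk_mem_edgeCut_iff]
  tauto

theorem eq_of_adj_of_forall_mem_edgeCut {v a b : V} (hstar : ∀ e ∈ G.edgeCut S, v ∈ e)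
    (hv : v ∈ S) (ha : a ∈ S) (hb : b ∉ S) (hab : G.Adj a b) : a = v := by
  have hmem := hstar _ (mk_mem_edgeCut_iff.mpr ⟨hab, by tauto⟩)
  rcases Sym2.mem_iff.mp hmem with rfl | rfl
  · rfl
  · exact absurd hv hb

variable {α : Type*} [Zero α] [One α]

theorem isBlockDiagonal_adjMatrix_deleteEdges_edgeCut
    [DecidableRel (G.deleteEdges (G.edgeCut S)).Adj] :
    ((G.deleteEdges (G.edgeCut S)).adjMatrix α).IsBlockDiagonal S := fun a b hab => by
  rw [adjMatrix_apply, if_neg (by rw [deleteEdges_edgeCut_adj]; tauto)]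

theorem adjMatrix_deleteEdges_edgeCut_apply_of_iff [DecidableRel G.Adj]
    [DecidableRel (G.deleteEdges (G.edgeCut S)).Adj] {a b : V} (h : a ∈ S ↔ b ∈ S) :
    (G.deleteEdges (G.edgeCut S)).adjMatrix α a b = G.adjMatrix α a b := by
  simp only [adjMatrix_apply, deleteEdges_edgeCut_adj, h, and_true]

end SimpleGraph

theorem graphEnergy_eq_trace_cfc_abs {V : Type*} [Fintype V] [DecidableEq V] (G : SimpleGraph V)
    [DecidableRel G.Adj] : graphEnergy G = trace (cfc (|·| : ℝ → ℝ) (G.adjMatrix ℝ)) := by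
  rw [(G.isHermitian_adjMatrix ℝ).trace_cfc, graphEnergy]
  congr!

theorem energy_deleteEdgeCut_star_lt_general {V : Type*} [Fintype V] [DecidableEq V]
    (G : SimpleGraph V) (S : Set V)
    (F : Set (Sym2 V))
    (hF : F = {e | e ∈ G.edgeSet ∧ ∃ a b, e = s(a, b) ∧ a ∈ S ∧ b ∉ S})
    (hne : F.Nonempty)
    (v : V) (hv : v ∈ S) (hstar : ∀ e ∈ F, v ∈ e) :
    graphEnergy (G.deleteEdges F) < graphEnergy G := by
  classical
  change F = G.edgeCut S at hF
  subst hF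
  obtain ⟨_, hab, a, b, rfl, ha, hb⟩ := hne
  obtain rfl := G.eq_of_adj_of_forall_mem_edgeCut hstar hv ha hb hab
  rw [graphEnergy_eq_trace_cfc_abs, graphEnergy_eq_trace_cfc_abs]
  refine trace_cfc_abs_lt_of_star_crossing (G.isHermitian_adjMatrix ℝ)
    ((G.deleteEdges _).isHermitian_adjMatrix ℝ) G.isBlockDiagonal_adjMatrix_deleteEdges_edgeCut
    (fun i k h => (G.adjMatrix_deleteEdges_edgeCut_apply_of_iff h).symm) ha hb
    (by simp) (by simpa using hab) fun i k hi hk hiv => ?_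
  exact if_neg fun hik => hiv (G.eq_of_adj_of_forall_mem_edgeCut hstar ha hi hk hik)

theorem energy_deleteEdgeCut_star_lt {V : Type*} [Fintype V] [DecidableEq V]
    (G : SimpleGraph V) (S : Set V) (hS : S.Nonempty) (hS' : S ≠ Set.univ)
    (F : Set (Sym2 V))
    (hF : F = {e | e ∈ G.edgeSet ∧ ∃ a b, e = s(a, b) ∧ a ∈ S ∧ b ∉ S})
    (hne : F.Nonempty)
    (v : V) (hv : v ∈ S) (hstar : ∀ e ∈ F, v ∈ e) :
    graphEnergy (G.deleteEdges F) < graphEnergy G :=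
  energy_deleteEdgeCut_star_lt_general G S F hF hne v hv hstar
end

section
/- The energy of a finite simple graph is never an odd integer. -/
/-!
The eigenvalues of a graph sum to the trace of its adjacency matrix, which is `0`, so the energy
`∑ |λᵢ|` equals `2 ∑ λᵢ⁻`. Each `λᵢ` is a root of the monic integer polynomial `charpoly`, hence an
algebraic integer, and so is each negative part `λᵢ⁻ ∈ {-λᵢ, 0}`. If the energy were an integer `m`,
then `m / 2` would be a rational algebraic integer, hence an integer, so `m` is even.
-/

open Finset

lemma Finset.sum_abs_eq_two_nsmul_sum_negPart {ι α : Type*} [AddCommGroup α] [LinearOrder α]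
    [IsOrderedAddMonoid α] (s : Finset ι) (f : ι → α) (hf : ∑ i ∈ s, f i = 0) :
    ∑ i ∈ s, |f i| = 2 • ∑ i ∈ s, (f i)⁻ := by
  rw [smul_sum, ← sum_congr rfl fun i _ => abs_sub_eq_two_nsmul_negPart (f i), sum_sub_distrib,
    hf, sub_zero]

lemma IsIntegral.negPart {R A : Type*} [CommRing R] [CommRing A] [LinearOrder A] [IsOrderedRing A]
    [Algebra R A] {x : A} (hx : IsIntegral R x) : IsIntegral R x⁻ := by
  rcases le_total x 0 with hneg | hpos
  · rw [negPart_eq_neg.mpr hneg]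
    exact hx.neg
  · rw [negPart_eq_zero.mpr hpos]
    exact isIntegral_zero

lemma Int.even_of_intCast_eq_two_mul_isIntegral {K : Type*} [Field K] [CharZero K] {m : ℤ} {x : K}
    (hx : IsIntegral ℤ x) (hm : (m : K) = 2 * x) : Even m := by
  have hx_rat : algebraMap ℚ K (m / 2) = x := by
    rw [map_div₀, map_intCast, map_ofNat, hm]
    field_simp
  rw [← hx_rat, isIntegral_algebraMap_iff (algebraMap ℚ K).injective] at hx
  obtain ⟨k, hk⟩ := IsIntegrallyClosed.isIntegral_iff.mp hx
  refine ⟨k, Int.cast_injective (α := ℚ) ?_⟩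
  rw [algebraMap_int_eq, eq_intCast] at hk
  push_cast
  linarith [div_mul_cancel₀ (m : ℚ) (two_ne_zero' ℚ)]

namespace Matrix.IsHermitian

variable {n : Type*} [Fintype n] [DecidableEq n] {A : Matrix n n ℝ}

lemma isRoot_charpoly_eigenvalues (hA : A.IsHermitian) (i : n) :
    A.charpoly.IsRoot (hA.eigenvalues i) := by
  rw [hA.charpoly_eq, Polynomial.IsRoot, Polynomial.eval_prod]
  exact prod_eq_zero (mem_univ i) (by simp)

lemma isIntegral_eigenvalues {R : Type*} [CommRing R] [Algebra R ℝ] (hA : A.IsHermitian)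
    {B : Matrix n n R} (hB : B.map (algebraMap R ℝ) = A) (i : n) :
    IsIntegral R (hA.eigenvalues i) := by
  refine ⟨B.charpoly, B.charpoly_monic, ?_⟩
  rw [← Polynomial.eval_map, ← charpoly_map, hB]
  exact hA.isRoot_charpoly_eigenvalues i

lemma even_of_sum_abs_eigenvalues_eq_intCast (hA : A.IsHermitian) {B : Matrix n n ℤ}
    (hB : B.map (algebraMap ℤ ℝ) = A) (htrace : A.trace = 0) {m : ℤ}
    (hm : ∑ i, |hA.eigenvalues i| = m) : Even m := by
  have hsum : ∑ i, hA.eigenvalues i = 0 := by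
    simpa [hA.trace_eq_sum_eigenvalues] using htrace
  rw [sum_abs_eq_two_nsmul_sum_negPart _ _ hsum, two_nsmul, ← two_mul] at hm
  exact Int.even_of_intCast_eq_two_mul_isIntegral
    (IsIntegral.sum _ fun i _ => (hA.isIntegral_eigenvalues hB i).negPart) hm.symm

end Matrix.IsHermitian

lemma SimpleGraph.map_adjMatrix_int {V : Type*} (G : SimpleGraph V) [DecidableRel G.Adj]
    {R : Type*} [Ring R] : (G.adjMatrix ℤ).map (algebraMap ℤ R) = G.adjMatrix R := by
  ext i j
  by_cases h : G.Adj i j <;> simp [h]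

theorem energy_not_odd {V : Type*} [Fintype V] [DecidableEq V] (G : SimpleGraph V) :
    ∀ m : ℤ, Odd m → graphEnergy G ≠ (m : ℝ) := by
  let := Classical.decRel G.Adj
  intro m hm henergy
  exact Int.not_even_iff_odd.mpr hm <| Matrix.IsHermitian.even_of_sum_abs_eigenvalues_eq_intCast _
    G.map_adjMatrix_int (G.trace_adjMatrix (α := ℝ)) henergy
end

section
/- The tree W on 7 vertices obtained by attaching two pendant vertices to each end of a path of length 2 (i.e., a central vertex of degree 2 adjacent to two vertices of degree 3, each of which has two leaves) is hypoenergetic: E(W) < 7. -/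
open Finset

/-- Explicit adjacency matrix of the double-broom `W`. -/
def Wmat : Matrix (Fin 7) (Fin 7) ℝ := fun i j =>
  if (i = 0 ∧ j = 1) ∨ (i = 1 ∧ j = 0) ∨ (i = 0 ∧ j = 2) ∨ (i = 2 ∧ j = 0) ∨
     (i = 1 ∧ j = 3) ∨ (i = 3 ∧ j = 1) ∨ (i = 1 ∧ j = 4) ∨ (i = 4 ∧ j = 1) ∨
     (i = 2 ∧ j = 5) ∨ (i = 5 ∧ j = 2) ∨ (i = 2 ∧ j = 6) ∨ (i = 6 ∧ j = 2)
  then 1 else 0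

def Wleft : Matrix (Fin 7) (Fin 4) ℝ := fun i j =>
  if (i = 0 ∧ j = 0) ∨ (i = 0 ∧ j = 1) ∨ (i = 1 ∧ j = 2) ∨ (i = 2 ∧ j = 3) ∨
     (i = 3 ∧ j = 0) ∨ (i = 4 ∧ j = 0) ∨ (i = 5 ∧ j = 1) ∨ (i = 6 ∧ j = 1)
  then 1 else 0

def Wright : Matrix (Fin 4) (Fin 7) ℝ := fun i j =>
  if (i = 0 ∧ j = 1) ∨ (i = 1 ∧ j = 2) ∨ (i = 2 ∧ j = 0) ∨ (i = 2 ∧ j = 3) ∨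
     (i = 2 ∧ j = 4) ∨ (i = 3 ∧ j = 0) ∨ (i = 3 ∧ j = 5) ∨ (i = 3 ∧ j = 6)
  then 1 else 0

set_option maxHeartbeats 2000000 in
lemma Wmat_factor : Wmat = Wleft * Wright := by
  ext i j
  fin_cases i <;> fin_cases j <;>
    · simp only [Wmat, Wleft, Wright, Matrix.mul_apply, Fin.sum_univ_four]
      norm_num (config := { decide := true })

lemma Wmat_rank : Wmat.rank ≤ 4 := by
  rw [Wmat_factor]
  calc (Wleft * Wright).rank ≤ Wleft.rank := Matrix.rank_mul_le_left _ _
    _ ≤ Fintype.card (Fin 4) := Matrix.rank_le_card_width _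
    _ = 4 := by simp

set_option maxHeartbeats 1000000 in
lemma Wmat_trace_sq : (Wmat * Wmat).trace = 12 := by
  simp only [Matrix.trace, Matrix.diag, Matrix.mul_apply, Fin.sum_univ_seven, Wmat]
  norm_num (config := { decide := true })

lemma sum_sq_eigenvalues {n : ℕ} (M : Matrix (Fin n) (Fin n) ℝ) (hM : M.IsHermitian) :
    ∑ i, hM.eigenvalues i ^ 2 = (M * M).trace := by
  set U : Matrix (Fin n) (Fin n) ℝ :=
    (Matrix.IsHermitian.eigenvectorUnitary hM : Matrix (Fin n) (Fin n) ℝ) with hU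
  have hsU : star U * U = 1 := Unitary.coe_star_mul_self _
  set D : Matrix (Fin n) (Fin n) ℝ :=
    Matrix.diagonal (RCLike.ofReal ∘ hM.eigenvalues) with hD
  have hspec : M = U * D * star U := hM.spectral_theorem
  have key : M * M = U * (D * D) * star U := by
    conv_lhs => rw [hspec]
    simp only [Matrix.mul_assoc]
    rw [← Matrix.mul_assoc (star U) U, hsU, Matrix.one_mul]
  rw [key, Matrix.trace_mul_cycle, ← Matrix.mul_assoc, hsU, Matrix.one_mul]
  simp [hD, Matrix.diagonal_mul_diagonal, Matrix.trace_diagonal, RCLike.ofReal_real_eq_id,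
    sq, Function.comp]

lemma eigenvalues_congr {n : ℕ} {M N : Matrix (Fin n) (Fin n) ℝ} (h : M = N)
    (hM : M.IsHermitian) (hN : N.IsHermitian) : hM.eigenvalues = hN.eigenvalues := by
  subst h; rfl

set_option maxHeartbeats 2000000 in
theorem W_hypoenergetic :
    graphEnergy (SimpleGraph.fromEdgeSet
      {s(0, 1), s(0, 2), s(1, 3), s(1, 4), s(2, 5), s(2, 6)} : SimpleGraph (Fin 7)) < 7 := by
  set G : SimpleGraph (Fin 7) := SimpleGraph.fromEdgeSet
      {s(0, 1), s(0, 2), s(1, 3), s(1, 4), s(2, 5), s(2, 6)} with hG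
  letI : DecidableRel G.Adj := Classical.decRel _
  have hadj : ∀ i j : Fin 7, G.Adj i j ↔
      ((i = 0 ∧ j = 1) ∨ (i = 1 ∧ j = 0) ∨ (i = 0 ∧ j = 2) ∨ (i = 2 ∧ j = 0) ∨
       (i = 1 ∧ j = 3) ∨ (i = 3 ∧ j = 1) ∨ (i = 1 ∧ j = 4) ∨ (i = 4 ∧ j = 1) ∨
       (i = 2 ∧ j = 5) ∨ (i = 5 ∧ j = 2) ∨ (i = 2 ∧ j = 6) ∨ (i = 6 ∧ j = 2)) := by
    intro i j
    rw [hG, SimpleGraph.fromEdgeSet_adj]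
    simp only [Set.mem_insert_iff, Set.mem_singleton_iff, Sym2.eq_iff]
    constructor
    · rintro ⟨h1, _⟩
      simpa only [or_assoc] using h1
    · intro h
      have h1 := h
      rw [show ((i = 0 ∧ j = 1) ∨ (i = 1 ∧ j = 0) ∨ (i = 0 ∧ j = 2) ∨ (i = 2 ∧ j = 0) ∨
         (i = 1 ∧ j = 3) ∨ (i = 3 ∧ j = 1) ∨ (i = 1 ∧ j = 4) ∨ (i = 4 ∧ j = 1) ∨
         (i = 2 ∧ j = 5) ∨ (i = 5 ∧ j = 2) ∨ (i = 2 ∧ j = 6) ∨ (i = 6 ∧ j = 2)) =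
         (((i = 0 ∧ j = 1) ∨ (i = 1 ∧ j = 0)) ∨ ((i = 0 ∧ j = 2) ∨ (i = 2 ∧ j = 0)) ∨
         ((i = 1 ∧ j = 3) ∨ (i = 3 ∧ j = 1)) ∨ ((i = 1 ∧ j = 4) ∨ (i = 4 ∧ j = 1)) ∨
         ((i = 2 ∧ j = 5) ∨ (i = 5 ∧ j = 2)) ∨ ((i = 2 ∧ j = 6) ∨ (i = 6 ∧ j = 2)))
         from by simp only [or_assoc]] at h1
      refine ⟨h1, ?_⟩
      rintro rfl
      rcases h with ⟨h1,h2⟩|⟨h1,h2⟩|⟨h1,h2⟩|⟨h1,h2⟩|⟨h1,h2⟩|⟨h1,h2⟩|⟨h1,h2⟩|⟨h1,h2⟩|⟨h1,h2⟩|⟨h1,h2⟩|⟨h1,h2⟩|⟨h1,h2⟩ <;>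
        subst h1 <;> exact absurd h2 (by decide)
  have hAB : G.adjMatrix ℝ = Wmat := by
    ext i j
    rw [SimpleGraph.adjMatrix_apply]
    show _ = if _ then (1:ℝ) else 0
    exact if_congr (hadj i j) rfl rfl
  have hW : Wmat.IsHermitian := by
    rw [← hAB]
    rw [Matrix.IsHermitian, Matrix.conjTranspose_eq_transpose_of_trivial]
    exact G.isSymm_adjMatrix
  have hA : (G.adjMatrix ℝ).IsHermitian := hAB ▸ hW
  have hEnergy : graphEnergy G = ∑ i, |hA.eigenvalues i| := rfl
  rw [hEnergy, eigenvalues_congr hAB hA hW]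
  set μ := hW.eigenvalues with hμ
  -- sum of squares of eigenvalues is 12
  have hsumsq : ∑ i, μ i ^ 2 = 12 := by
    rw [hμ, sum_sq_eigenvalues, Wmat_trace_sq]
  -- at most 4 nonzero eigenvalues
  have hcard : (univ.filter fun i => μ i ≠ 0).card ≤ 4 := by
    have h1 := hW.rank_eq_card_non_zero_eigs
    have h2 : Fintype.card {i // μ i ≠ 0} = (univ.filter fun i => μ i ≠ 0).card :=
      Fintype.card_subtype _
    rw [← h2, ← h1]
    exact Wmat_rank
  set s := univ.filter fun i => μ i ≠ 0 with hs
  have hsum : ∑ i, |μ i| = ∑ i ∈ s, |μ i| := by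
    rw [hs]
    refine (Finset.sum_filter_of_ne ?_).symm
    intro x _ hx
    simpa using hx
  have hCS : (∑ i ∈ s, |μ i|) ^ 2 ≤ (s.card : ℝ) * ∑ i ∈ s, |μ i| ^ 2 :=
    sq_sum_le_card_mul_sum_sq
  have hle : ∑ i ∈ s, |μ i| ^ 2 ≤ 12 := by
    rw [← hsumsq]
    calc ∑ i ∈ s, |μ i| ^ 2 = ∑ i ∈ s, μ i ^ 2 := by simp [sq_abs]
      _ ≤ ∑ i, μ i ^ 2 := Finset.sum_le_sum_of_subset_of_nonneg (Finset.filter_subset _ _)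
          (fun i _ _ => sq_nonneg _)
  have hsq : (∑ i ∈ s, |μ i|) ^ 2 < 7 ^ 2 := by
    have hcard' : (s.card : ℝ) ≤ 4 := by exact_mod_cast hcard
    have hsumnn : (0:ℝ) ≤ ∑ i ∈ s, |μ i| ^ 2 :=
      Finset.sum_nonneg fun i _ => sq_nonneg _
    nlinarith
  rw [hsum]
  exact lt_of_pow_lt_pow_left₀ 2 (by norm_num) hsq
end

section
/- Let G be a connected graph with maximum degree at most 3 and girth at least 5 (no 3-cycles or 4-cycles), with n vertices and at least n edges. Then E(G) > n. -/
open Finset Matrix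

private lemma trace_pow_eq {n : Type*} [Fintype n] [DecidableEq n]
    {A : Matrix n n ℝ} (hA : A.IsHermitian) (k : ℕ) :
    (A ^ k).trace = ∑ i, hA.eigenvalues i ^ k := by
  set U : Matrix n n ℝ := (hA.eigenvectorUnitary : Matrix n n ℝ) with hUdef
  have hU1 : star U * U = 1 := Matrix.mem_unitaryGroup_iff'.mp hA.eigenvectorUnitary.2
  have hU2 : U * star U = 1 := Matrix.mem_unitaryGroup_iff.mp hA.eigenvectorUnitary.2
  set E : Matrix n n ℝ := Matrix.diagonal (RCLike.ofReal ∘ hA.eigenvalues) with hEdef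
  have hspec : A = U * E * star U := hA.spectral_theorem
  have key : A ^ k = U * E ^ k * star U := by
    induction k with
    | zero => simp [pow_zero, hU2]
    | succ k ih =>
      rw [pow_succ, ih, hspec, pow_succ]
      rw [show U * E ^ k * star U * (U * E * star U) = U * E ^ k * (star U * U) * E * star U by
        simp only [Matrix.mul_assoc]]
      rw [hU1]
      simp only [Matrix.mul_one, Matrix.mul_assoc]
  rw [key, Matrix.trace_mul_cycle, hU1, Matrix.one_mul,
    Matrix.diagonal_pow, Matrix.trace_diagonal]
  simp

private lemma rayleigh_bound {n : Type*} [Fintype n] [DecidableEq n]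
    {A : Matrix n n ℝ} (hA : A.IsHermitian) {M : ℝ}
    (hM : ∀ i, |hA.eigenvalues i| ≤ M) (x : n → ℝ) :
    (A *ᵥ x) ⬝ᵥ (A *ᵥ x) ≤ M ^ 2 * (x ⬝ᵥ x) := by
  set U : Matrix n n ℝ := (hA.eigenvectorUnitary : Matrix n n ℝ) with hUdef
  have hU1 : star U * U = 1 := Matrix.mem_unitaryGroup_iff'.mp hA.eigenvectorUnitary.2
  have hU2 : U * star U = 1 := Matrix.mem_unitaryGroup_iff.mp hA.eigenvectorUnitary.2
  have hUt : Uᵀ = star U := (Matrix.conjTranspose_eq_transpose_of_trivial U).symm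
  set E : Matrix n n ℝ := Matrix.diagonal (RCLike.ofReal ∘ hA.eigenvalues) with hEdef
  have hspec : A = U * E * star U := hA.spectral_theorem
  have iso : ∀ z : n → ℝ, (U *ᵥ z) ⬝ᵥ (U *ᵥ z) = z ⬝ᵥ z := by
    intro z
    rw [Matrix.dotProduct_mulVec, ← Matrix.vecMul_transpose, hUt,
      Matrix.vecMul_vecMul, hU1, Matrix.vecMul_one]
  set y : n → ℝ := star U *ᵥ x with hydef
  have hx : x = U *ᵥ y := by
    rw [hydef, Matrix.mulVec_mulVec, hU2, Matrix.one_mulVec]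
  have hAx : A *ᵥ x = U *ᵥ (E *ᵥ y) := by
    rw [hspec, hydef, ← Matrix.mulVec_mulVec, ← Matrix.mulVec_mulVec]
  rw [hAx, iso, hx, iso]
  have hE : ∀ i, (E *ᵥ y) i = hA.eigenvalues i * y i := by
    intro i; simp [hEdef, Matrix.mulVec_diagonal]
  simp only [dotProduct, hE, Finset.mul_sum]
  apply Finset.sum_le_sum
  intro i _
  have h2 : (hA.eigenvalues i) ^ 2 ≤ M ^ 2 := by
    have := hM i
    nlinarith [abs_nonneg (hA.eigenvalues i), le_abs_self (hA.eigenvalues i),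
      neg_abs_le (hA.eigenvalues i)]
  nlinarith [mul_nonneg (sub_nonneg.2 h2) (mul_self_nonneg (y i))]

private lemma no_c4 {V : Type*} (G : SimpleGraph V) (hgirth : 5 ≤ G.girth)
    {u v x y : V} (huv : u ≠ v) (hxy : x ≠ y)
    (h1 : G.Adj u x) (h2 : G.Adj x v) (h3 : G.Adj v y) (h4 : G.Adj y u) : False := by
  have hegirth : 5 ≤ G.egirth := by
    rcases eq_or_ne G.egirth ⊤ with h | h
    · simp [h]
    · have := ENat.coe_toNat h
      rw [← this]
      exact_mod_cast hgirth
  set w : G.Walk u u :=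
    SimpleGraph.Walk.cons h1 (SimpleGraph.Walk.cons h2
      (SimpleGraph.Walk.cons h3 (SimpleGraph.Walk.cons h4 SimpleGraph.Walk.nil))) with hw
  have hcyc : w.IsCycle := by
    rw [SimpleGraph.Walk.isCycle_def]
    refine ⟨?_, by simp [hw], ?_⟩
    · rw [SimpleGraph.Walk.isTrail_def]
      simp only [hw, SimpleGraph.Walk.edges_cons, SimpleGraph.Walk.edges_nil,
        List.nodup_cons, List.mem_cons, List.not_mem_nil, or_false, List.nodup_nil, and_true,
        Sym2.eq_iff]
      have := h1.ne; have := h2.ne; have := h3.ne; have := h4.ne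
      tauto
    · simp only [hw, SimpleGraph.Walk.support_cons, SimpleGraph.Walk.support_nil,
        List.tail_cons, List.nodup_cons, List.mem_cons, List.not_mem_nil, or_false,
        List.nodup_nil, and_true, List.mem_singleton]
      have := h1.ne; have := h2.ne; have := h3.ne; have := h4.ne
      refine ⟨?_, ?_, ?_⟩ <;> tauto
  have := SimpleGraph.le_egirth.mp hegirth u w hcyc
  rw [hw] at this
  simp only [SimpleGraph.Walk.length_cons, SimpleGraph.Walk.length_nil] at this
  norm_num at this

private lemma key_ineq (x : ℝ) : 0 ≤ 16 * |x| - 12 * x ^ 2 + x ^ 4 := by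
  have h := abs_nonneg x
  have h2 : x ^ 2 = |x| ^ 2 := (sq_abs x).symm
  have h4 : x ^ 4 = |x| ^ 4 := by
    rw [show x ^ 4 = (x ^ 2) ^ 2 by ring, h2]; ring
  rw [h2, h4]
  nlinarith [mul_nonneg (mul_nonneg h (sq_nonneg (|x| - 2))) (by linarith : (0:ℝ) ≤ |x| + 4)]

theorem energy_gt_of_girth_ge_five {V : Type*} [Fintype V] [DecidableEq V]
    (G : SimpleGraph V) [DecidableRel G.Adj] (hG : G.Connected)
    (hΔ : G.maxDegree ≤ 3) (hgirth : 5 ≤ G.girth)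
    (hm : Fintype.card V ≤ G.edgeFinset.card) :
    (Fintype.card V : ℝ) < graphEnergy G := by
  classical
  have hne : Nonempty V := hG.nonempty
  set A : Matrix V V ℝ := G.adjMatrix ℝ with hAdef
  have hA : A.IsHermitian := by
    rw [Matrix.IsHermitian, Matrix.conjTranspose_eq_transpose_of_trivial]
    exact G.isSymm_adjMatrix
  -- identify graphEnergy with sum over |eigenvalues| of A
  have hEnergy : graphEnergy G = ∑ i, |hA.eigenvalues i| := by
    rw [graphEnergy]
    have hgen : ∀ (M₁ M₂ : Matrix V V ℝ) (h₁ : M₁.IsHermitian) (h₂ : M₂.IsHermitian),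
        M₁ = M₂ → ∑ i, |h₁.eigenvalues i| = ∑ i, |h₂.eigenvalues i| := by
      rintro M₁ M₂ h₁ h₂ rfl; rfl
    exact hgen _ _ _ _ (by congr!)
  set ev : V → ℝ := hA.eigenvalues with hevdef
  set nn : ℝ := (Fintype.card V : ℝ) with hnn
  set m : ℝ := (G.edgeFinset.card : ℝ) with hm'
  set d : V → ℝ := fun v => (G.degree v : ℝ) with hd
  set D2 : ℝ := ∑ v, d v ^ 2 with hD2
  -- basic numeric facts
  have hnm : nn ≤ m := by rw [hnn, hm']; exact_mod_cast hm
  have hn1 : (1 : ℝ) ≤ nn := by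
    rw [hnn]; exact_mod_cast Fintype.card_pos
  -- n ≥ 2 and degrees ≥ 1
  have hedge : ∃ a b : V, G.Adj a b := by
    have hpos : 0 < G.edgeFinset.card := lt_of_lt_of_le Fintype.card_pos hm
    obtain ⟨e, he⟩ := Finset.card_pos.mp hpos
    induction e with
    | h a b =>
      rw [SimpleGraph.mem_edgeFinset] at he
      exact ⟨a, b, he⟩
  have hdeg1 : ∀ v, 1 ≤ G.degree v := by
    intro v
    rw [Nat.one_le_iff_ne_zero, ← Nat.pos_iff_ne_zero, SimpleGraph.degree_pos_iff_exists_adj]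
    obtain ⟨a, b, hab⟩ := hedge
    by_cases hva : v = a
    · exact ⟨b, hva ▸ hab⟩
    · obtain ⟨p⟩ := hG.preconnected v a
      cases p with
      | nil => exact absurd rfl hva
      | cons h q => exact ⟨_, h⟩
  have hdeg3 : ∀ v, G.degree v ≤ 3 := fun v => le_trans (G.degree_le_maxDegree v) hΔ
  have hdr : ∀ v, (1:ℝ) ≤ d v ∧ d v ≤ 3 := by
    intro v
    constructor
    · simp only [hd]; exact_mod_cast hdeg1 v
    · simp only [hd]; exact_mod_cast hdeg3 v
  -- sum of degrees
  have hsumdeg : ∑ v, d v = 2 * m := by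
    rw [hd, hm']
    rw [← Nat.cast_sum]
    rw [SimpleGraph.sum_degrees_eq_twice_card_edges]
    push_cast; ring
  -- D2 bound from degrees
  have hD2deg : D2 ≤ 8 * m - 3 * nn := by
    have : ∀ v : V, d v ^ 2 ≤ 4 * d v - 3 := by
      intro v
      obtain ⟨h1, h3⟩ := hdr v
      nlinarith
    calc D2 ≤ ∑ v, (4 * d v - 3) := Finset.sum_le_sum (fun v _ => this v)
    _ = 4 * (∑ v, d v) - 3 * nn := by
        rw [Finset.sum_sub_distrib, ← Finset.mul_sum]
        simp [hnn, Finset.card_univ, mul_comm]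
    _ = 8 * m - 3 * nn := by rw [hsumdeg]; ring
  -- trace computations
  set B : Matrix V V ℝ := A * A with hB
  have hBdiag : ∀ i, B i i = d i := by
    intro i
    rw [hB, hAdef, SimpleGraph.adjMatrix_mul_self_apply_self]
  have hS2 : ∑ i, ev i ^ 2 = 2 * m := by
    have := trace_pow_eq hA 2
    rw [← this, pow_two, Matrix.trace]
    have : ∀ i, (A * A).diag i = d i := hBdiag
    rw [show ∑ i, (A*A).diag i = ∑ i, d i from Finset.sum_congr rfl (fun i _ => this i)]
    exact hsumdeg
  -- B entries are common-neighbour counts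
  have hBval : ∀ i j, B i j = (((G.neighborFinset i).filter (fun k => G.Adj k j)).card : ℝ) := by
    intro i j
    rw [hB, hAdef, SimpleGraph.adjMatrix_mul_apply]
    simp [SimpleGraph.adjMatrix_apply, Finset.sum_boole]
  have hAsymm : ∀ i k : V, A i k = A k i := by
    intro i k
    rw [hAdef]
    simp [SimpleGraph.adjMatrix_apply, SimpleGraph.adj_comm]
  have hBsymm : ∀ i j, B j i = B i j := by
    intro i j
    rw [hB, Matrix.mul_apply, Matrix.mul_apply]
    rw [Finset.sum_congr rfl (fun k _ => by rw [hAsymm j k, hAsymm k i, mul_comm])]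
  have hBnonneg : ∀ i j, 0 ≤ B i j := by
    intro i j; rw [hBval]; positivity
  have hBle1 : ∀ i j, i ≠ j → B i j ≤ 1 := by
    intro i j hij
    rw [hBval]
    by_contra hgt
    push_neg at hgt
    have h2 : 1 < ((G.neighborFinset i).filter (fun k => G.Adj k j)).card := by exact_mod_cast hgt
    obtain ⟨x, hx, y, hy, hxy⟩ := Finset.one_lt_card.mp h2
    simp only [Finset.mem_filter, SimpleGraph.mem_neighborFinset] at hx hy
    exact no_c4 G hgirth hij hxy hx.1 hx.2 hy.2.symm hy.1.symm
  have hArow : ∀ i, ∑ j, A i j = d i := by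
    intro i
    rw [hAdef, hd]
    simp only [SimpleGraph.adjMatrix_apply, Finset.sum_boole]
    rw [SimpleGraph.degree, SimpleGraph.neighborFinset_eq_filter]
  have hBtotal : ∑ i, ∑ j, B i j = D2 := by
    calc ∑ i, ∑ j, B i j = ∑ i, ∑ k, A i k * d k := by
          refine Finset.sum_congr rfl fun i _ => ?_
          rw [Finset.sum_congr rfl (fun j (_ : j ∈ univ) => by rw [hB, Matrix.mul_apply])]
          rw [Finset.sum_comm]
          refine Finset.sum_congr rfl fun k _ => ?_
          rw [← Finset.mul_sum, hArow]
    _ = ∑ k, d k * d k := by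
          rw [Finset.sum_comm]
          refine Finset.sum_congr rfl fun k _ => ?_
          rw [← Finset.sum_mul]
          rw [show ∑ i, A i k = d k from by
            rw [Finset.sum_congr rfl (fun i (_ : i ∈ univ) => hAsymm i k), hArow]]
    _ = D2 := by
          rw [hD2]
          exact Finset.sum_congr rfl fun k _ => by ring
  set S4 : ℝ := ∑ i, ev i ^ 4 with hS4def
  have hS4 : S4 ≤ 2 * D2 - 2 * m := by
    have htr : S4 = ∑ i, ∑ j, B i j ^ 2 := by
      rw [hS4def, ← trace_pow_eq hA 4]
      rw [show A ^ 4 = B * B from by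
        rw [hB, show (4:ℕ) = 2 + 2 from rfl, pow_add, pow_two], Matrix.trace]
      refine Finset.sum_congr rfl fun i _ => ?_
      rw [Matrix.diag, Matrix.mul_apply]
      refine Finset.sum_congr rfl fun j _ => ?_
      rw [hBsymm i j]
      ring
    rw [htr]
    have hrowbound : ∀ i, ∑ j, B i j ^ 2 ≤ d i ^ 2 - d i + ∑ j, B i j := by
      intro i
      have hmem : i ∈ (univ : Finset V) := Finset.mem_univ i
      rw [← Finset.add_sum_erase _ _ hmem, ← Finset.add_sum_erase _ (fun j => B i j) hmem,
        hBdiag]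
      have hst : ∑ j ∈ univ.erase i, B i j ^ 2 ≤ ∑ j ∈ univ.erase i, B i j := by
        refine Finset.sum_le_sum fun j hj => ?_
        have hji : j ≠ i := Finset.ne_of_mem_erase hj
        have h0 := hBnonneg i j
        have h1 := hBle1 i j (Ne.symm hji)
        nlinarith
      linarith
    calc ∑ i, ∑ j, B i j ^ 2 ≤ ∑ i, (d i ^ 2 - d i + ∑ j, B i j) :=
          Finset.sum_le_sum fun i _ => hrowbound i
    _ = (∑ i, (d i ^ 2 - d i)) + ∑ i, ∑ j, B i j := Finset.sum_add_distrib
    _ = D2 - 2 * m + D2 := by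
          rw [Finset.sum_sub_distrib, hBtotal, hsumdeg, hD2]
    _ = 2 * D2 - 2 * m := by ring
  -- max |eigenvalue|
  obtain ⟨i0, -, hi0⟩ := Finset.exists_max_image univ (fun i => |ev i|) Finset.univ_nonempty
  set M : ℝ := |ev i0| with hMdef
  have hMabs : ∀ i, |ev i| ≤ M := fun i => hi0 i (Finset.mem_univ i)
  have hM0 : 0 ≤ M := abs_nonneg _
  have hRay : D2 ≤ M ^ 2 * nn := by
    have hray := rayleigh_bound hA hMabs (fun _ => 1)
    have hAone : A *ᵥ (fun _ => (1:ℝ)) = d := by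
      funext v
      rw [hAdef, hd]
      have h := SimpleGraph.adjMatrix_mulVec_const_apply (G := G) (α := ℝ) (a := 1) (v := v)
      simpa [Function.const] using h
    rw [hAone] at hray
    have hdd : d ⬝ᵥ d = D2 := by
      rw [dotProduct, hD2]
      exact Finset.sum_congr rfl fun v _ => by ring
    have h11 : (fun _ : V => (1:ℝ)) ⬝ᵥ (fun _ => (1:ℝ)) = nn := by
      rw [dotProduct, hnn]
      simp
    rw [hdd, h11] at hray
    exact hray
  -- assemble
  set En : ℝ := ∑ i, |ev i| with hEndef
  rw [hEnergy]
  have hexpand : ∑ i, (16 * |ev i| - 12 * ev i ^ 2 + ev i ^ 4)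
      = 16 * En - 12 * (2 * m) + S4 := by
    rw [Finset.sum_add_distrib, Finset.sum_sub_distrib, ← Finset.mul_sum, ← Finset.mul_sum,
      ← hEndef, ← hS4def, hS2]
  rcases le_or_gt M 2 with hM2 | hM2
  · have hM4 : M ^ 2 ≤ 4 := by nlinarith
    have hD24 : D2 ≤ 4 * nn := by nlinarith
    have hsumf : 0 ≤ ∑ i, (16 * |ev i| - 12 * ev i ^ 2 + ev i ^ 4) :=
      Finset.sum_nonneg fun i _ => key_ineq _
    rw [hexpand] at hsumf
    linarith
  · have hfmax : 16 * M - 12 * M ^ 2 + M ^ 4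
        ≤ ∑ i, (16 * |ev i| - 12 * ev i ^ 2 + ev i ^ 4) := by
      have hle := Finset.single_le_sum (f := fun i => 16 * |ev i| - 12 * ev i ^ 2 + ev i ^ 4)
        (fun i _ => key_ineq _) (Finset.mem_univ i0)
      calc 16 * M - 12 * M ^ 2 + M ^ 4
          = 16 * |ev i0| - 12 * ev i0 ^ 2 + ev i0 ^ 4 := by
            rw [hMdef, sq_abs, show |ev i0| ^ 4 = ev i0 ^ 4 by
              rw [show (4:ℕ) = 2 * 2 from rfl, pow_mul, pow_mul, sq_abs]]
      _ ≤ _ := hle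
    have hg : 0 < 16 * M - 12 * M ^ 2 + M ^ 4 := by
      have h1 : 0 < M - 2 := by linarith
      nlinarith [mul_pos (mul_pos (mul_pos (show (0:ℝ) < M by linarith) h1) h1)
        (show (0:ℝ) < M + 4 by linarith)]
    rw [hexpand] at hfmax
    linarith
end
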